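/- Let ℓ be a prime and m ≥ 0, n ≥ 1 integers. In GSp₄(ℚ_ℓ) one has the double coset decomposition B^{(1)}_{m,n} · diag(ℓ, ℓ, 1, 1) · B^{(1)}_{m,n} = ⋃_{x,y,z=0}^{ℓ−1} A(x,y,z) · B^{(1)}_{m,n}, where A(x,y,z) is the matrix with rows (ℓ, 0, x, y), (0, ℓ, z, x), (0, 0, 1, 0), (0, 0, 0, 1), and the ℓ³ listed left cosets are pairwise distinct. -/

import Mathlib

open Pointwise

noncomputable section

/-- The standard skew-symmetric matrix `J` defining `GSp₄`. -/
def Jmat (p : ℕ) [Fact p.Prime] : Matrix (Fin 4) (Fin 4) ℚ_[p] :=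
  !![0, 0, 0, 1; 0, 0, 1, 0; 0, -1, 0, 0; -1, 0, 0, 0]

/-- The subgroup `B^{(1)}_{m,n}` of `GSp₄(ℤ_ℓ)`: integral symplectic similitudes with
multiplier `μ ≡ 1 (mod ℓ^m)`, all entries below the diagonal divisible by `ℓⁿ`, and
(4,4)-entry `≡ 1 (mod ℓⁿ)`, viewed inside the 4×4 matrices over `ℚ_ℓ`. -/
def Bmn1 (p : ℕ) [Fact p.Prime] (m n : ℕ) : Set (Matrix (Fin 4) (Fin 4) ℚ_[p]) :=
  {g | (∀ i j, ‖g i j‖ ≤ 1) ∧ ‖g.det‖ = 1 ∧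
    (∃ μ : ℚ_[p], ‖μ‖ = 1 ∧ ‖μ - 1‖ ≤ (p : ℝ) ^ (-(m : ℤ)) ∧
      g.transpose * Jmat p * g = μ • Jmat p) ∧
    ‖g 1 0‖ ≤ (p : ℝ) ^ (-(n : ℤ)) ∧ ‖g 2 0‖ ≤ (p : ℝ) ^ (-(n : ℤ)) ∧
    ‖g 2 1‖ ≤ (p : ℝ) ^ (-(n : ℤ)) ∧ ‖g 3 0‖ ≤ (p : ℝ) ^ (-(n : ℤ)) ∧
    ‖g 3 1‖ ≤ (p : ℝ) ^ (-(n : ℤ)) ∧ ‖g 3 2‖ ≤ (p : ℝ) ^ (-(n : ℤ)) ∧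
    ‖g 3 3 - 1‖ ≤ (p : ℝ) ^ (-(n : ℤ))}

/-- The coset representatives `A(x,y,z)` for `0 ≤ x,y,z < ℓ`. -/
def rep8 (p : ℕ) [Fact p.Prime] :
    Fin p × Fin p × Fin p → Matrix (Fin 4) (Fin 4) ℚ_[p] :=
  fun i => !![(p : ℚ_[p]), 0, ((i.1 : ℕ) : ℚ_[p]), ((i.2.1 : ℕ) : ℚ_[p]);
              0, (p : ℚ_[p]), ((i.2.2 : ℕ) : ℚ_[p]), ((i.1 : ℕ) : ℚ_[p]);
              0, 0, 1, 0;
              0, 0, 0, 1]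

/-!
Write `D = diag(ℓ, ℓ, 1, 1)` and `U(x, y, z)` for the element of the unipotent radical of the
Siegel parabolic with upper right block `[[x, y], [z, x]]`, so that `A(x, y, z) = U(x, y, z) D`.
Since `U(x, y, z) ∈ B`, each `A(x, y, z) B` lies in `B D B`. Conversely, for `b ∈ B` one looks
for `c = D⁻¹ U(-x, -y, -z) b D ∈ B`, which gives `b D = A(x, y, z) c`. Conjugation by `D`
divides the upper right block by `ℓ` and multiplies the lower left block by `ℓ`, so it suffices
that the upper right block of `U(-x, -y, -z) b` vanishes mod `ℓ`. As `n ≥ 1`, `b` is upper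
triangular mod `ℓ` with units `b 2 2` and `b 3 3` on the diagonal; three of the four
congruences determine `x, z, y`, and the fourth follows from the symplectic relation.
Finally, `A(x', y', z') b = A(x, y, z)` gives `D b D⁻¹ = U(x - x', y - y', z - z')`, whose upper
right block is `ℓ` times that of `b`; hence `ℓ` divides the differences of the digits.
-/

section Ultrametric

variable {R : Type*} [NormedRing R]

lemma norm_mul_le_of_norm_le_one_left {a b : R} {C : ℝ} (ha : ‖a‖ ≤ 1)
    (hb : ‖b‖ ≤ C) : ‖a * b‖ ≤ C :=
  (norm_mul_le a b).trans ((mul_le_of_le_one_left (norm_nonneg b) ha).trans hb)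

lemma norm_mul_le_of_norm_le_one_right {a b : R} {C : ℝ} (ha : ‖a‖ ≤ C)
    (hb : ‖b‖ ≤ 1) : ‖a * b‖ ≤ C :=
  (norm_mul_le a b).trans ((mul_le_of_le_one_right (norm_nonneg a) hb).trans ha)

variable [IsUltrametricDist R]

lemma IsUltrametricDist.norm_add_le_of_le {a b : R} {C : ℝ} (ha : ‖a‖ ≤ C)
    (hb : ‖b‖ ≤ C) : ‖a + b‖ ≤ C :=
  (IsUltrametricDist.norm_add_le_max a b).trans (max_le ha hb)

lemma IsUltrametricDist.norm_sub_le_of_le {a b : R} {C : ℝ} (ha : ‖a‖ ≤ C)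
    (hb : ‖b‖ ≤ C) : ‖a - b‖ ≤ C := by
  rw [sub_eq_add_neg]; exact IsUltrametricDist.norm_add_le_of_le ha (by rwa [norm_neg])

variable {ι : Type*} [Fintype ι]

lemma Matrix.norm_mul_apply_le {A B : Matrix ι ι R} {C : ℝ} (hC : 0 ≤ C) {i j : ι}
    (h : ∀ k, ‖A i k‖ * ‖B k j‖ ≤ C) : ‖(A * B) i j‖ ≤ C :=
  IsUltrametricDist.norm_sum_le_of_forall_le_of_nonneg hC
    fun k _ => (norm_mul_le _ _).trans (h k)

lemma Matrix.norm_mul_apply_le_one {A B : Matrix ι ι R} (hA : ∀ i j, ‖A i j‖ ≤ 1)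
    (hB : ∀ i j, ‖B i j‖ ≤ 1) (i j : ι) : ‖(A * B) i j‖ ≤ 1 :=
  Matrix.norm_mul_apply_le zero_le_one fun k =>
    mul_le_one₀ (hA i k) (norm_nonneg _) (hB k j)

lemma Matrix.norm_mul_apply_le_of_lt [LinearOrder ι] {A B : Matrix ι ι R} {ε : ℝ}
    (hA : ∀ i j, ‖A i j‖ ≤ 1) (hB : ∀ i j, ‖B i j‖ ≤ 1)
    (hAε : ∀ i j, j < i → ‖A i j‖ ≤ ε) (hBε : ∀ i j, j < i → ‖B i j‖ ≤ ε)
    {i j : ι} (hji : j < i) : ‖(A * B) i j‖ ≤ ε := by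
  refine Matrix.norm_mul_apply_le ((norm_nonneg _).trans (hAε i j hji)) fun k => ?_
  rcases lt_or_ge j k with hjk | hkj
  · exact (mul_le_of_le_one_left (norm_nonneg _) (hA i k)).trans (hBε k j hjk)
  · exact (mul_le_of_le_one_right (norm_nonneg _) (hB k j)).trans
      (hAε i k (hkj.trans_lt hji))

end Ultrametric

section Padic

variable {p : ℕ} [Fact p.Prime]

lemma inv_prime_lt_one : (p : ℝ)⁻¹ < 1 :=
  inv_lt_one_of_one_lt₀ (Nat.one_lt_cast.2 (Fact.out : p.Prime).one_lt)

lemma zpow_neg_le_inv_prime {n : ℕ} (hn : 1 ≤ n) :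
    (p : ℝ) ^ (-(n : ℤ)) ≤ (p : ℝ)⁻¹ := by
  have hp : (1 : ℝ) ≤ p := Nat.one_le_cast.2 (Fact.out : p.Prime).one_lt.le
  simpa [zpow_neg_one] using zpow_le_zpow_right₀ hp (show -(n : ℤ) ≤ -1 by omega)

lemma Padic.natCast_eq_of_norm_sub_le {a b : ℕ} (ha : a < p) (hb : b < p)
    (h : ‖(a : ℚ_[p]) - b‖ ≤ (p : ℝ)⁻¹) : a = b := by
  have hdvd : ‖(((a : ℤ) - b : ℤ) : ℚ_[p])‖ ≤ (p : ℝ) ^ (-(1 : ℕ) : ℤ) := by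
    push_cast
    simpa [zpow_neg_one] using h
  rw [Padic.norm_int_le_pow_iff_dvd, pow_one, ← Int.modEq_iff_dvd, Int.natCast_modEq_iff] at hdvd
  exact (hdvd.eq_of_lt_of_lt hb ha).symm

lemma Padic.exists_natCast_norm_sub_le {t : ℚ_[p]} (ht : ‖t‖ ≤ 1) :
    ∃ x < p, ‖t - x‖ ≤ (p : ℝ)⁻¹ := by
  obtain ⟨x, hxp, hx⟩ := PadicInt.exists_mem_range (⟨t, ht⟩ : ℤ_[p])
  rw [IsLocalRing.mem_maximalIdeal, PadicInt.mem_nonunits] at hx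
  have hx' : ‖t - (x : ℚ_[p])‖ < 1 := hx
  refine ⟨x, hxp, ?_⟩
  simpa [zpow_neg_one] using
    (Padic.norm_le_pow_iff_norm_lt_pow_add_one (t - (x : ℚ_[p])) (-1)).2 (by simpa using hx')

lemma Padic.exists_natCast_norm_sub_mul_le {a u : ℚ_[p]} (ha : ‖a‖ ≤ 1) (hu : ‖u‖ = 1) :
    ∃ x < p, ‖a - x * u‖ ≤ (p : ℝ)⁻¹ := by
  have hu0 : u ≠ 0 := norm_ne_zero_iff.mp (by rw [hu]; exact one_ne_zero)
  obtain ⟨x, hxp, hx⟩ := Padic.exists_natCast_norm_sub_le (t := a / u)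
    (by rwa [norm_div, hu, div_one])
  refine ⟨x, hxp, ?_⟩
  rwa [show a - x * u = (a / u - x) * u by field_simp, norm_mul, hu, mul_one]

end Padic

open scoped Matrix

section SiegelUnipotent

variable {R : Type*} [Ring R]

def siegelUnip (x y z : R) : Matrix (Fin 4) (Fin 4) R :=
  !![1, 0, x, y; 0, 1, z, x; 0, 0, 1, 0; 0, 0, 0, 1]

lemma siegelUnip_mul_siegelUnip (x y z x' y' z' : R) :
    siegelUnip x y z * siegelUnip x' y' z' = siegelUnip (x + x') (y + y') (z + z') := by
  ext i j
  fin_cases i <;> fin_cases j <;> simp [siegelUnip, Matrix.mul_apply, Fin.sum_univ_four] <;> abel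

lemma siegelUnip_zero : siegelUnip (0 : R) 0 0 = 1 := by
  ext i j
  fin_cases i <;> fin_cases j <;> simp [siegelUnip]

lemma siegelUnip_mul_apply_zero (x y z : R) (b : Matrix (Fin 4) (Fin 4) R) (j : Fin 4) :
    (siegelUnip x y z * b) 0 j = b 0 j + x * b 2 j + y * b 3 j := by
  simp [siegelUnip, Matrix.mul_apply, Fin.sum_univ_four]

lemma siegelUnip_mul_apply_one (x y z : R) (b : Matrix (Fin 4) (Fin 4) R) (j : Fin 4) :
    (siegelUnip x y z * b) 1 j = b 1 j + z * b 2 j + x * b 3 j := by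
  simp [siegelUnip, Matrix.mul_apply, Fin.sum_univ_four]

end SiegelUnipotent

section GSp4

variable {p : ℕ} [Fact p.Prime]

lemma transpose_mul_Jmat_mul_apply (g : Matrix (Fin 4) (Fin 4) ℚ_[p]) (i j : Fin 4) :
    (gᵀ * Jmat p * g) i j = g 0 i * g 3 j + g 1 i * g 2 j - g 2 i * g 1 j - g 3 i * g 0 j := by
  simp [Jmat, Matrix.mul_apply, Fin.sum_univ_four]
  ring

lemma diagonal_transpose_mul_Jmat_mul_diagonal {d : Fin 4 → ℚ_[p]} {c : ℚ_[p]}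
    (h03 : d 0 * d 3 = c) (h12 : d 1 * d 2 = c) :
    (Matrix.diagonal d)ᵀ * Jmat p * Matrix.diagonal d = c • Jmat p := by
  ext i j
  rw [Matrix.diagonal_transpose, Matrix.mul_diagonal, Matrix.diagonal_mul]
  subst h03
  fin_cases i <;> fin_cases j <;> simp [Jmat] <;> first | linear_combination h12 | ring

lemma siegelUnip_transpose_mul_Jmat_mul (x y z : ℚ_[p]) :
    (siegelUnip x y z)ᵀ * Jmat p * siegelUnip x y z = (1 : ℚ_[p]) • Jmat p := by
  ext i j
  rw [transpose_mul_Jmat_mul_apply]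
  fin_cases i <;> fin_cases j <;> simp [siegelUnip, Jmat]

lemma siegelUnip_det (x y z : ℚ_[p]) : (siegelUnip x y z).det = 1 := by
  rw [Matrix.det_of_isUpperTriangular]
  · simp [siegelUnip, Fin.prod_univ_four]
  · intro i j hij
    fin_cases i <;> fin_cases j <;> first | exact absurd hij (by decide) | simp [siegelUnip]

def diagPP11 (p : ℕ) [Fact p.Prime] : Matrix (Fin 4) (Fin 4) ℚ_[p] :=
  Matrix.diagonal ![(p : ℚ_[p]), (p : ℚ_[p]), 1, 1]

def diagPP11Inv (p : ℕ) [Fact p.Prime] : Matrix (Fin 4) (Fin 4) ℚ_[p] :=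
  Matrix.diagonal ![(p : ℚ_[p])⁻¹, (p : ℚ_[p])⁻¹, 1, 1]

lemma diagPP11_mul_diagPP11Inv : diagPP11 p * diagPP11Inv p = 1 := by
  have hp : (p : ℚ_[p]) ≠ 0 := Nat.cast_ne_zero.2 (Fact.out : p.Prime).ne_zero
  rw [diagPP11, diagPP11Inv, Matrix.diagonal_mul_diagonal, ← Matrix.diagonal_one]
  congr 1
  ext i
  fin_cases i <;> simp [hp]

lemma diagPP11_transpose_mul_Jmat_mul :
    (diagPP11 p)ᵀ * Jmat p * diagPP11 p = (p : ℚ_[p]) • Jmat p :=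
  diagonal_transpose_mul_Jmat_mul_diagonal (by simp) (by simp)

lemma diagPP11Inv_transpose_mul_Jmat_mul :
    (diagPP11Inv p)ᵀ * Jmat p * diagPP11Inv p = (p : ℚ_[p])⁻¹ • Jmat p :=
  diagonal_transpose_mul_Jmat_mul_diagonal (by simp) (by simp)

lemma diagPP11Inv_mul_mul_diagPP11_apply (M : Matrix (Fin 4) (Fin 4) ℚ_[p]) (i j : Fin 4) :
    (diagPP11Inv p * M * diagPP11 p) i j =
      ![(p : ℚ_[p])⁻¹, (p : ℚ_[p])⁻¹, 1, 1] i * M i j *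
        ![(p : ℚ_[p]), (p : ℚ_[p]), 1, 1] j := by
  rw [diagPP11, diagPP11Inv, Matrix.mul_diagonal, Matrix.diagonal_mul]

lemma rep8_eq_siegelUnip_mul_diagPP11 (i : Fin p × Fin p × Fin p) :
    rep8 p i =
      siegelUnip ((i.1 : ℕ) : ℚ_[p]) ((i.2.1 : ℕ) : ℚ_[p]) ((i.2.2 : ℕ) : ℚ_[p]) *
        diagPP11 p := by
  ext r s
  fin_cases r <;> fin_cases s <;> simp [rep8, siegelUnip, diagPP11]

end GSp4

section Bmn1

variable {p : ℕ} [Fact p.Prime] {m n : ℕ}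

lemma mem_Bmn1_iff {g : Matrix (Fin 4) (Fin 4) ℚ_[p]} :
    g ∈ Bmn1 p m n ↔ (∀ i j, ‖g i j‖ ≤ 1) ∧ ‖g.det‖ = 1 ∧
      (∃ μ : ℚ_[p], ‖μ‖ = 1 ∧ ‖μ - 1‖ ≤ (p : ℝ) ^ (-(m : ℤ)) ∧
        gᵀ * Jmat p * g = μ • Jmat p) ∧
      (∀ i j, j < i → ‖g i j‖ ≤ (p : ℝ) ^ (-(n : ℤ))) ∧
      ‖g 3 3 - 1‖ ≤ (p : ℝ) ^ (-(n : ℤ)) := by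
  refine and_congr_right' (and_congr_right' (and_congr_right' ⟨?_, ?_⟩))
  · rintro ⟨h10, h20, h21, h30, h31, h32, h33⟩
    refine ⟨fun i j hji => ?_, h33⟩
    fin_cases i <;> fin_cases j <;> first | exact absurd hji (by decide) | assumption
  · rintro ⟨hlow, h33⟩
    exact ⟨hlow 1 0 (by decide), hlow 2 0 (by decide), hlow 2 1 (by decide),
      hlow 3 0 (by decide), hlow 3 1 (by decide), hlow 3 2 (by decide), h33⟩

lemma siegelUnip_mem_Bmn1 {x y z : ℚ_[p]} (hx : ‖x‖ ≤ 1) (hy : ‖y‖ ≤ 1)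
    (hz : ‖z‖ ≤ 1) : siegelUnip x y z ∈ Bmn1 p m n := by
  refine mem_Bmn1_iff.2 ⟨fun i j => ?_, by simp [siegelUnip_det],
    ⟨1, norm_one, by simp, siegelUnip_transpose_mul_Jmat_mul x y z⟩,
    fun i j hji => ?_, by simp [siegelUnip]⟩
  · fin_cases i <;> fin_cases j <;> simp [siegelUnip] <;> assumption
  · fin_cases i <;> fin_cases j <;> first | exact absurd hji (by decide) | simp [siegelUnip]

lemma one_mem_Bmn1 : (1 : Matrix (Fin 4) (Fin 4) ℚ_[p]) ∈ Bmn1 p m n :=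
  siegelUnip_zero (R := ℚ_[p]) ▸ siegelUnip_mem_Bmn1 (by simp) (by simp) (by simp)

lemma mul_mem_Bmn1 {a b : Matrix (Fin 4) (Fin 4) ℚ_[p]} (ha : a ∈ Bmn1 p m n)
    (hb : b ∈ Bmn1 p m n) : a * b ∈ Bmn1 p m n := by
  obtain ⟨ha1, ha2, ⟨μa, hμa1, hμa2, hμa3⟩, haε, ha33⟩ := mem_Bmn1_iff.1 ha
  obtain ⟨hb1, hb2, ⟨μb, hμb1, hμb2, hμb3⟩, hbε, hb33⟩ := mem_Bmn1_iff.1 hb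
  refine mem_Bmn1_iff.2 ⟨Matrix.norm_mul_apply_le_one ha1 hb1,
    by rw [Matrix.det_mul, norm_mul, ha2, hb2, one_mul],
    ⟨μa * μb, by rw [norm_mul, hμa1, hμb1, one_mul], ?_, ?_⟩,
    fun i j => Matrix.norm_mul_apply_le_of_lt ha1 hb1 haε hbε, ?_⟩
  · rw [show μa * μb - 1 = μa * (μb - 1) + (μa - 1) by ring]
    exact IsUltrametricDist.norm_add_le_of_le
      (norm_mul_le_of_norm_le_one_left hμa1.le hμb2) hμa2
  · calc (a * b)ᵀ * Jmat p * (a * b) = bᵀ * (aᵀ * Jmat p * a) * b := by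
          simp only [Matrix.transpose_mul, Matrix.mul_assoc]
      _ = (μa * μb) • Jmat p := by
          rw [hμa3, Matrix.mul_smul, Matrix.smul_mul, hμb3, smul_smul]
  · rw [show (a * b) 3 3 - 1 = a 3 0 * b 0 3 + a 3 1 * b 1 3 + a 3 2 * b 2 3 +
        a 3 3 * (b 3 3 - 1) + (a 3 3 - 1) by simp [Matrix.mul_apply, Fin.sum_univ_four]; ring]
    refine IsUltrametricDist.norm_add_le_of_le (IsUltrametricDist.norm_add_le_of_le
      (IsUltrametricDist.norm_add_le_of_le (IsUltrametricDist.norm_add_le_of_le ?_ ?_) ?_)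
      (norm_mul_le_of_norm_le_one_left (ha1 3 3) hb33)) ha33 <;>
    exact norm_mul_le_of_norm_le_one_right (haε _ _ (by decide)) (hb1 _ _)

end Bmn1

section Decomposition

variable {p : ℕ} [Fact p.Prime] {m n : ℕ}

lemma diagPP11Inv_mul_mul_diagPP11_mem_Bmn1 {M : Matrix (Fin 4) (Fin 4) ℚ_[p]}
    (hM : M ∈ Bmn1 p m n)
    (htop : ∀ i j : Fin 4, i < 2 → 2 ≤ j → ‖M i j‖ ≤ (p : ℝ)⁻¹) :
    diagPP11Inv p * M * diagPP11 p ∈ Bmn1 p m n := by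
  obtain ⟨hint, hdet, ⟨μ, hμ1, hμ2, hsympl⟩, hlow, h33⟩ := mem_Bmn1_iff.1 hM
  have hp : (p : ℚ_[p]) ≠ 0 := Nat.cast_ne_zero.2 (Fact.out : p.Prime).ne_zero
  have hpR : (0 : ℝ) < p := Nat.cast_pos.2 (Fact.out : p.Prime).pos
  refine mem_Bmn1_iff.2 ⟨fun i j => ?_, ?_, ⟨μ, hμ1, hμ2, ?_⟩, fun i j hji => ?_, ?_⟩
  · rw [diagPP11Inv_mul_mul_diagPP11_apply]
    fin_cases i <;> fin_cases j <;> simp [Padic.norm_p, hpR.ne', mul_comm (p : ℝ)] <;>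
      first
      | exact hint _ _
      | exact mul_le_one₀ (hint _ _) (by positivity) inv_prime_lt_one.le
      | exact (mul_le_mul_of_nonneg_right (htop _ _ (by decide) (by decide)) hpR.le).trans_eq
          (inv_mul_cancel₀ hpR.ne')
  · rw [Matrix.det_mul, Matrix.det_mul,
      show (diagPP11Inv p).det * M.det * (diagPP11 p).det =
        M.det * (diagPP11 p * diagPP11Inv p).det by rw [Matrix.det_mul]; ring,
      diagPP11_mul_diagPP11Inv, Matrix.det_one, mul_one, hdet]
  · calc (diagPP11Inv p * M * diagPP11 p)ᵀ * Jmat p * (diagPP11Inv p * M * diagPP11 p)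
        = (diagPP11 p)ᵀ * (Mᵀ * ((diagPP11Inv p)ᵀ * Jmat p * diagPP11Inv p) * M) *
            diagPP11 p := by
          simp only [Matrix.transpose_mul, Matrix.mul_assoc]
      _ = ((p : ℚ_[p])⁻¹ * μ * p) • Jmat p := by
          rw [diagPP11Inv_transpose_mul_Jmat_mul]
          simp only [Matrix.mul_smul, Matrix.smul_mul]
          rw [hsympl]
          simp only [Matrix.mul_smul, Matrix.smul_mul]
          rw [diagPP11_transpose_mul_Jmat_mul, smul_smul, smul_smul]
      _ = μ • Jmat p := by rw [mul_comm _ μ, mul_assoc, inv_mul_cancel₀ hp, mul_one]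
  · refine le_trans ?_ (hlow i j hji)
    rw [diagPP11Inv_mul_mul_diagPP11_apply]
    fin_cases i <;> fin_cases j <;>
      first
      | exact absurd hji (by decide)
      | (simp [Padic.norm_p, hpR.ne', mul_comm (p : ℝ)] <;>
          exact mul_le_of_le_one_right (norm_nonneg _) inv_prime_lt_one.le)
  · simpa [diagPP11Inv_mul_mul_diagPP11_apply] using h33

lemma Bmn1.norm_lower_le (hn : 1 ≤ n) {b : Matrix (Fin 4) (Fin 4) ℚ_[p]}
    (hb : b ∈ Bmn1 p m n) :
    (∀ i j, j < i → ‖b i j‖ ≤ (p : ℝ)⁻¹) ∧ ‖b 3 3 - 1‖ ≤ (p : ℝ)⁻¹ := by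
  obtain ⟨-, -, -, hlow, h33⟩ := mem_Bmn1_iff.1 hb
  exact ⟨fun i j hji => (hlow i j hji).trans (zpow_neg_le_inv_prime hn),
    h33.trans (zpow_neg_le_inv_prime hn)⟩

lemma Bmn1.norm_apply_three_three (hn : 1 ≤ n) {b : Matrix (Fin 4) (Fin 4) ℚ_[p]}
    (hb : b ∈ Bmn1 p m n) : ‖b 3 3‖ = 1 := by
  have h33 := (Bmn1.norm_lower_le hn hb).2
  rw [← norm_one (α := ℚ_[p])]
  exact Padic.norm_eq_of_norm_sub_lt_right
    (by rw [norm_one]; exact h33.trans_lt inv_prime_lt_one)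

/-- Entry `(1, 2)` of `bᵀ J b = μ J` says that `b 1 1 * b 2 2 ≡ μ` modulo entries below the
diagonal. -/
lemma Bmn1.norm_apply_two_two (hn : 1 ≤ n) {b : Matrix (Fin 4) (Fin 4) ℚ_[p]}
    (hb : b ∈ Bmn1 p m n) : ‖b 2 2‖ = 1 := by
  obtain ⟨hint, -, ⟨μ, hμ, -, hsympl⟩, -, -⟩ := mem_Bmn1_iff.1 hb
  have hlow := (Bmn1.norm_lower_le hn hb).1
  have h12 := congrFun (congrFun hsympl 1) 2
  rw [transpose_mul_Jmat_mul_apply] at h12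
  simp [Jmat] at h12
  have hclose : ‖b 1 1 * b 2 2 - μ‖ ≤ (p : ℝ)⁻¹ := by
    rw [show b 1 1 * b 2 2 - μ = b 2 1 * b 1 2 + b 3 1 * b 0 2 - b 0 1 * b 3 2 by
      linear_combination h12]
    exact IsUltrametricDist.norm_sub_le_of_le (IsUltrametricDist.norm_add_le_of_le
      (norm_mul_le_of_norm_le_one_right (hlow 2 1 (by decide)) (hint 1 2))
      (norm_mul_le_of_norm_le_one_right (hlow 3 1 (by decide)) (hint 0 2)))
      (norm_mul_le_of_norm_le_one_left (hint 0 1) (hlow 3 2 (by decide)))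
  have hunit : ‖b 1 1‖ * ‖b 2 2‖ = 1 := by
    rw [← norm_mul, Padic.norm_eq_of_norm_sub_lt_right
      (hclose.trans_lt (hμ ▸ inv_prime_lt_one)), hμ]
  nlinarith [hint 1 1, hint 2 2, norm_nonneg (b 1 1), norm_nonneg (b 2 2)]

lemma exists_siegelUnip_mul_topRight_le (hn : 1 ≤ n) {b : Matrix (Fin 4) (Fin 4) ℚ_[p]}
    (hb : b ∈ Bmn1 p m n) :
    ∃ i : Fin p × Fin p × Fin p, ∀ r s : Fin 4, r < 2 → 2 ≤ s →
      ‖(siegelUnip (-((i.1 : ℕ) : ℚ_[p])) (-((i.2.1 : ℕ) : ℚ_[p]))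
        (-((i.2.2 : ℕ) : ℚ_[p])) * b) r s‖ ≤ (p : ℝ)⁻¹ := by
  obtain ⟨hint, -, ⟨μ, -, -, hsympl⟩, -, -⟩ := mem_Bmn1_iff.1 hb
  have hnat := IsUltrametricDist.norm_natCast_le_one ℚ_[p]
  have hlow := (Bmn1.norm_lower_le hn hb).1
  have hu2 := Bmn1.norm_apply_two_two hn hb
  have hu3 := Bmn1.norm_apply_three_three hn hb
  obtain ⟨x, hxp, hx⟩ := Padic.exists_natCast_norm_sub_mul_le (hint 0 2) hu2
  obtain ⟨z, hzp, hz⟩ := Padic.exists_natCast_norm_sub_mul_le (hint 1 2) hu2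
  obtain ⟨y, hyp, hy⟩ := Padic.exists_natCast_norm_sub_mul_le
    (IsUltrametricDist.norm_sub_le_of_le (hint 0 3)
      (norm_mul_le_of_norm_le_one_left (hnat x) (hint 2 3))) hu3
  -- The fourth entry of the block is forced by entry `(2, 3)` of `bᵀ J b = μ J`.
  have h23 := congrFun (congrFun hsympl 2) 3
  rw [transpose_mul_Jmat_mul_apply] at h23
  simp [Jmat] at h23
  have hw : ‖b 1 3 - z * b 2 3 - x * b 3 3‖ ≤ (p : ℝ)⁻¹ := by
    rw [← one_mul ‖_‖, ← hu2, ← norm_mul, show b 2 2 * (b 1 3 - z * b 2 3 - x * b 3 3) =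
      b 3 3 * (b 0 2 - x * b 2 2) + b 2 3 * (b 1 2 - z * b 2 2) - b 3 2 * b 0 3 by
        linear_combination -h23]
    exact IsUltrametricDist.norm_sub_le_of_le (IsUltrametricDist.norm_add_le_of_le
      (norm_mul_le_of_norm_le_one_left (hint 3 3) hx)
      (norm_mul_le_of_norm_le_one_left (hint 2 3) hz))
      (norm_mul_le_of_norm_le_one_right (hlow 3 2 (by decide)) (hint 0 3))
  have h02 : ‖b 0 2 - x * b 2 2 - y * b 3 2‖ ≤ (p : ℝ)⁻¹ :=
    IsUltrametricDist.norm_sub_le_of_le hx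
      (norm_mul_le_of_norm_le_one_left (hnat y) (hlow 3 2 (by decide)))
  have h12 : ‖b 1 2 - z * b 2 2 - x * b 3 2‖ ≤ (p : ℝ)⁻¹ :=
    IsUltrametricDist.norm_sub_le_of_le hz
      (norm_mul_le_of_norm_le_one_left (hnat x) (hlow 3 2 (by decide)))
  refine ⟨(⟨x, hxp⟩, ⟨y, hyp⟩, ⟨z, hzp⟩), fun r s hr hs => ?_⟩
  fin_cases r <;> fin_cases s <;> (try exact absurd hr (by decide)) <;>
    (try exact absurd hs (by decide)) <;>
    simp [siegelUnip_mul_apply_zero, siegelUnip_mul_apply_one, ← sub_eq_add_neg] <;>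
    assumption

lemma exists_mul_diagPP11_eq_rep8_mul (hn : 1 ≤ n) {b : Matrix (Fin 4) (Fin 4) ℚ_[p]}
    (hb : b ∈ Bmn1 p m n) : ∃ i, ∃ c ∈ Bmn1 p m n, b * diagPP11 p = rep8 p i * c := by
  obtain ⟨i, hi⟩ := exists_siegelUnip_mul_topRight_le hn hb
  have hnat (k : ℕ) : ‖-(k : ℚ_[p])‖ ≤ 1 := by
    rw [norm_neg]; exact IsUltrametricDist.norm_natCast_le_one ℚ_[p] k
  refine ⟨i, _, diagPP11Inv_mul_mul_diagPP11_mem_Bmn1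
    (mul_mem_Bmn1 (siegelUnip_mem_Bmn1 (hnat _) (hnat _) (hnat _)) hb) hi, ?_⟩
  rw [rep8_eq_siegelUnip_mul_diagPP11]
  simp only [← Matrix.mul_assoc]
  rw [Matrix.mul_assoc _ (diagPP11 p), diagPP11_mul_diagPP11Inv, Matrix.mul_one,
    siegelUnip_mul_siegelUnip]
  simp [siegelUnip_zero]

lemma eq_of_rep8_mul_eq_rep8 {b : Matrix (Fin 4) (Fin 4) ℚ_[p]} (hb : ∀ r s, ‖b r s‖ ≤ 1)
    {i j : Fin p × Fin p × Fin p} (h : rep8 p j * b = rep8 p i) : i = j := by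
  have hDb : diagPP11 p * b = siegelUnip (((i.1 : ℕ) : ℚ_[p]) - (j.1 : ℕ))
      (((i.2.1 : ℕ) : ℚ_[p]) - (j.2.1 : ℕ)) (((i.2.2 : ℕ) : ℚ_[p]) - (j.2.2 : ℕ)) *
        diagPP11 p := by
    have := congrArg (siegelUnip (-((j.1 : ℕ) : ℚ_[p])) (-((j.2.1 : ℕ) : ℚ_[p]))
      (-((j.2.2 : ℕ) : ℚ_[p])) * ·) h
    simp only [rep8_eq_siegelUnip_mul_diagPP11, ← Matrix.mul_assoc, siegelUnip_mul_siegelUnip,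
      neg_add_cancel, siegelUnip_zero, Matrix.one_mul, neg_add_eq_sub] at this
    exact this
  have hclose : ∀ (a a' : Fin p) (r s : Fin 4), (p : ℚ_[p]) * b r s = (a : ℕ) - (a' : ℕ) →
      a = a' := fun a a' r s hrs =>
    Fin.ext <| Padic.natCast_eq_of_norm_sub_le a.isLt a'.isLt <| by
      rw [← hrs, norm_mul, Padic.norm_p]
      exact mul_le_of_le_one_right (by positivity) (hb r s)
  have entry : ∀ r s, (diagPP11 p * b) r s = _ := fun r s => congrFun (congrFun hDb r) s
  simp only [diagPP11, Matrix.diagonal_mul, Matrix.mul_diagonal] at entry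
  exact Prod.ext (hclose _ _ 0 2 (by simpa [siegelUnip] using entry 0 2))
    (Prod.ext (hclose _ _ 0 3 (by simpa [siegelUnip] using entry 0 3))
      (hclose _ _ 1 2 (by simpa [siegelUnip] using entry 1 2)))

end Decomposition

/-- Double coset decomposition of `B^{(1)}_{m,n} · diag(ℓ,ℓ,1,1) · B^{(1)}_{m,n}` into
`ℓ³` pairwise distinct left cosets. -/
theorem stmt8 (p : ℕ) [Fact p.Prime] (m n : ℕ) (hn : 1 ≤ n) :
    (Bmn1 p m n * {Matrix.diagonal ![(p : ℚ_[p]), (p : ℚ_[p]), 1, 1]} * Bmn1 p m n =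
      ⋃ i : Fin p × Fin p × Fin p,
        ({rep8 p i} : Set (Matrix (Fin 4) (Fin 4) ℚ_[p])) * Bmn1 p m n) ∧
    Function.Injective
      (fun i : Fin p × Fin p × Fin p =>
        ({rep8 p i} : Set (Matrix (Fin 4) (Fin 4) ℚ_[p])) * Bmn1 p m n) := by
  refine ⟨Set.Subset.antisymm ?_ ?_, fun i j hij => ?_⟩
  · rintro _ ⟨_, ⟨b, hb, _, rfl, rfl⟩, b', hb', rfl⟩
    obtain ⟨i, c, hc, hbc⟩ := exists_mul_diagPP11_eq_rep8_mul hn hb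
    refine Set.mem_iUnion.2 ⟨i, rep8 p i, rfl, c * b', mul_mem_Bmn1 hc hb', ?_⟩
    change rep8 p i * (c * b') = b * diagPP11 p * b'
    rw [← Matrix.mul_assoc, ← hbc]
  · rintro _ ⟨_, ⟨i, rfl⟩, _, rfl, b, hb, rfl⟩
    have hnat := IsUltrametricDist.norm_natCast_le_one ℚ_[p]
    exact ⟨_, ⟨_, siegelUnip_mem_Bmn1 (hnat _) (hnat _) (hnat _), _, rfl, rfl⟩, b, hb,
      by rw [rep8_eq_siegelUnip_mul_diagPP11]; rfl⟩
  · have hmem : rep8 p i ∈ ({rep8 p i} : Set _) * Bmn1 p m n :=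
      ⟨_, rfl, 1, one_mem_Bmn1, Matrix.mul_one _⟩
    rw [show ({rep8 p i} : Set _) * Bmn1 p m n = {rep8 p j} * Bmn1 p m n from hij] at hmem
    obtain ⟨_, rfl, b, hb, h⟩ := hmem
    exact eq_of_rep8_mul_eq_rep8 (mem_Bmn1_iff.1 hb).1 h
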